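/- Let U ∈ ℂ^{t×r}, V ∈ ℂ^{p×r} have orthonormal columns and let Q ∈ ℂ^{t×p} satisfy P_T(Q) = UV† and ‖P_{T^⊥}(Q)‖ ≤ 1/2. Then ‖Q‖_F ≤ (1/2)·sqrt(min(t,p) + 3r). -/

import Mathlib

/-!
Write `Q = UVᴴ + B` with `B = P_{T^⊥}(Q)`. The two summands are orthogonal for the trace inner
product, so `‖Q‖_F² = ‖UVᴴ‖_F² + ‖B‖_F² = r + ‖B‖_F²`. Since `B = (1 - UUᴴ) B = B (1 - VVᴴ)`,
`‖B‖_F²` is at most `‖B‖²` times the squared Frobenius norm of either projection, which is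
`t - r`, resp. `p - r`; hence `‖B‖_F² ≤ ¼ (min(t, p) - r)`.
-/

open Matrix

noncomputable def frob {m n : Type*} [Fintype m] [Fintype n] (A : Matrix m n ℂ) : ℝ :=
  Real.sqrt (∑ i, ∑ j, ‖A i j‖ ^ 2)

noncomputable def spec {m n : Type*} [Fintype m] [Fintype n] [DecidableEq m] [DecidableEq n]
    (A : Matrix m n ℂ) : ℝ :=
  ‖LinearMap.toContinuousLinearMap (Matrix.toEuclideanLin A)‖

noncomputable def colNorm {m n : Type*} [Fintype m] (A : Matrix m n ℂ) (j : n) : ℝ :=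
  Real.sqrt (∑ i, ‖A i j‖ ^ 2)

variable {m n k : Type*}

section Frobenius

variable [Fintype m] [Fintype n]

noncomputable def frobSq (A : Matrix m n ℂ) : ℝ :=
  ∑ i, ∑ j, ‖A i j‖ ^ 2

lemma frob_eq_sqrt_frobSq (A : Matrix m n ℂ) : frob A = √(frobSq A) := rfl

lemma frobSq_nonneg (A : Matrix m n ℂ) : 0 ≤ frobSq A := by
  unfold frobSq; positivity

lemma frobSq_eq_re_trace (A : Matrix m n ℂ) : frobSq A = (A * Aᴴ).trace.re := by
  simp [frobSq, trace, mul_apply, Complex.mul_conj, Complex.sq_norm]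

lemma frobSq_conjTranspose (A : Matrix m n ℂ) : frobSq Aᴴ = frobSq A := by
  unfold frobSq
  rw [Finset.sum_comm]
  simp [conjTranspose_apply]

lemma frobSq_add_of_mul_conjTranspose_eq_zero {A B : Matrix m n ℂ} (h : A * Bᴴ = 0) :
    frobSq (A + B) = frobSq A + frobSq B := by
  have h' : B * Aᴴ = 0 := by
    rw [← conjTranspose_conjTranspose B, ← conjTranspose_mul, h, conjTranspose_zero]
  simp only [frobSq_eq_re_trace, conjTranspose_add, Matrix.add_mul, Matrix.mul_add, h, h',
    trace_add, trace_zero, Complex.add_re, Complex.zero_re]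
  ring

variable [DecidableEq m] [DecidableEq n]

lemma spec_conjTranspose (A : Matrix m n ℂ) : spec Aᴴ = spec A := by
  unfold spec
  rw [toEuclideanLin_conjTranspose_eq_adjoint, LinearMap.adjoint_toContinuousLinearMap]
  exact ContinuousLinearMap.adjoint.norm_map _

lemma sum_norm_mulVec_sq_le (A : Matrix m n ℂ) (x : n → ℂ) :
    ∑ i, ‖(A *ᵥ x) i‖ ^ 2 ≤ spec A ^ 2 * ∑ j, ‖x j‖ ^ 2 := by
  have h := (LinearMap.toContinuousLinearMap (toEuclideanLin A)).le_opNorm (WithLp.toLp 2 x)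
  have h2 := pow_le_pow_left₀ (norm_nonneg _) h 2
  rw [mul_pow, EuclideanSpace.norm_sq_eq, EuclideanSpace.norm_sq_eq] at h2
  exact h2

lemma frobSq_mul_le [Fintype k] (A : Matrix m n ℂ) (B : Matrix n k ℂ) :
    frobSq (A * B) ≤ spec A ^ 2 * frobSq B := by
  unfold frobSq
  rw [Finset.sum_comm, Finset.sum_comm (f := fun i j => ‖B i j‖ ^ 2), Finset.mul_sum]
  exact Finset.sum_le_sum fun j _ => sum_norm_mulVec_sq_le A fun l => B l j

lemma frobSq_mul_le' [Fintype k] (A : Matrix k m ℂ) (B : Matrix m n ℂ) :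
    frobSq (A * B) ≤ frobSq A * spec B ^ 2 := by
  rw [← frobSq_conjTranspose, conjTranspose_mul, ← frobSq_conjTranspose A,
    ← spec_conjTranspose B, mul_comm]
  exact frobSq_mul_le _ _

lemma frobSq_le_sq_mul_min {B : Matrix m n ℂ} {P : Matrix m m ℂ} {R : Matrix n n ℂ}
    (hP : P * B = B) (hR : B * R = B) {c : ℝ} (hc : spec B ≤ c) :
    frobSq B ≤ c ^ 2 * min (frobSq P) (frobSq R) := by
  have hc2 : spec B ^ 2 ≤ c ^ 2 := pow_le_pow_left₀ (norm_nonneg _) hc 2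
  rw [mul_min_of_nonneg _ _ (sq_nonneg c)]
  refine le_min ?_ ?_
  · calc frobSq B = frobSq (P * B) := by rw [hP]
      _ ≤ frobSq P * spec B ^ 2 := frobSq_mul_le' P B
      _ ≤ c ^ 2 * frobSq P := by
        rw [mul_comm]; exact mul_le_mul_of_nonneg_right hc2 (frobSq_nonneg P)
  · calc frobSq B = frobSq (B * R) := by rw [hR]
      _ ≤ spec B ^ 2 * frobSq R := frobSq_mul_le B R
      _ ≤ c ^ 2 * frobSq R := mul_le_mul_of_nonneg_right hc2 (frobSq_nonneg R)

end Frobenius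

lemma eq_add_one_sub_mul_mul_one_sub {α : Type*} [Ring α] [Fintype m] [Fintype n]
    [DecidableEq m] [DecidableEq n] (P : Matrix m m α) (R : Matrix n n α) (Q : Matrix m n α) :
    Q = (P * Q + Q * R - P * Q * R) + (1 - P) * Q * (1 - R) := by
  simp only [Matrix.sub_mul, Matrix.mul_sub, Matrix.one_mul, Matrix.mul_one]
  abel

section Projections

variable {α : Type*} [Ring α] [StarRing α]

lemma conjTranspose_one_sub_mul_conjTranspose [DecidableEq m] [Fintype k] (U : Matrix m k α) :
    (1 - U * Uᴴ)ᴴ = 1 - U * Uᴴ := by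
  rw [conjTranspose_sub, conjTranspose_one, conjTranspose_mul, conjTranspose_conjTranspose]

variable [Fintype m] [Fintype k] [DecidableEq m] [DecidableEq k] {U : Matrix m k α}

lemma conjTranspose_mul_one_sub_mul_conjTranspose (hU : Uᴴ * U = 1) :
    Uᴴ * (1 - U * Uᴴ) = 0 := by
  rw [Matrix.mul_sub, Matrix.mul_one, ← Matrix.mul_assoc, hU, Matrix.one_mul, sub_self]

lemma one_sub_mul_conjTranspose_mul_self (hU : Uᴴ * U = 1) :
    (1 - U * Uᴴ) * (1 - U * Uᴴ) = 1 - U * Uᴴ := by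
  rw [Matrix.sub_mul, Matrix.one_mul, Matrix.mul_assoc,
    conjTranspose_mul_one_sub_mul_conjTranspose hU, Matrix.mul_zero, sub_zero]

lemma mul_conjTranspose_mul_conjTranspose_mul_one_sub {l : Type*} [Fintype l]
    (hU : Uᴴ * U = 1) (A : Matrix l k α) (X : Matrix l m α) :
    A * Uᴴ * (X * (1 - U * Uᴴ))ᴴ = 0 := by
  rw [conjTranspose_mul, conjTranspose_one_sub_mul_conjTranspose, Matrix.mul_assoc,
    ← Matrix.mul_assoc Uᴴ, conjTranspose_mul_one_sub_mul_conjTranspose hU, Matrix.zero_mul,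
    Matrix.mul_zero]

end Projections

section Orthonormal

variable [Fintype k] [DecidableEq k] {U : Matrix m k ℂ}

lemma frobSq_mul_conjTranspose_of_orthonormal [Fintype m] [Fintype n] {V : Matrix n k ℂ}
    (hU : Uᴴ * U = 1) (hV : Vᴴ * V = 1) : frobSq (U * Vᴴ) = Fintype.card k := by
  rw [frobSq_eq_re_trace, conjTranspose_mul, conjTranspose_conjTranspose, Matrix.mul_assoc,
    ← Matrix.mul_assoc Vᴴ, hV, Matrix.one_mul, trace_mul_comm, hU, trace_one]
  simp

lemma frobSq_one_sub_mul_conjTranspose [Fintype m] [DecidableEq m] (hU : Uᴴ * U = 1) :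
    frobSq (1 - U * Uᴴ) = Fintype.card m - Fintype.card k := by
  rw [frobSq_eq_re_trace, conjTranspose_one_sub_mul_conjTranspose,
    one_sub_mul_conjTranspose_mul_self hU, trace_sub, trace_one, trace_mul_comm, hU, trace_one]
  simp

end Orthonormal

/-- If P_T(Q) = UV† and ‖P_{T⊥}(Q)‖ ≤ 1/2 then ‖Q‖_F ≤ (1/2)·sqrt(min(t,p) + 3r). -/
theorem dual_certificate_frobenius_bound {t p r : ℕ} (U : Matrix (Fin t) (Fin r) ℂ)
    (V : Matrix (Fin p) (Fin r) ℂ) (hU : Uᴴ * U = 1) (hV : Vᴴ * V = 1)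
    (Q : Matrix (Fin t) (Fin p) ℂ)
    (hPT : U * Uᴴ * Q + Q * (V * Vᴴ) - U * Uᴴ * Q * (V * Vᴴ) = U * Vᴴ)
    (hspec : spec ((1 - U * Uᴴ) * Q * (1 - V * Vᴴ)) ≤ 1 / 2) :
    frob Q ≤ (1 / 2) * Real.sqrt ((min t p : ℝ) + 3 * r) := by
  set B := (1 - U * Uᴴ) * Q * (1 - V * Vᴴ) with hB
  have hQ : Q = U * Vᴴ + B := by rw [← hPT]; exact eq_add_one_sub_mul_mul_one_sub _ _ Q
  have hsplit : frobSq Q = r + frobSq B := by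
    rw [hQ, frobSq_add_of_mul_conjTranspose_eq_zero
        (mul_conjTranspose_mul_conjTranspose_mul_one_sub hV U _),
      frobSq_mul_conjTranspose_of_orthonormal hU hV, Fintype.card_fin]
  have hBbound : frobSq B ≤ (1 / 2) ^ 2 * (min (t : ℝ) p - r) := by
    have hleft : (1 - U * Uᴴ) * B = B := by
      rw [hB, ← Matrix.mul_assoc, ← Matrix.mul_assoc, one_sub_mul_conjTranspose_mul_self hU]
    have hright : B * (1 - V * Vᴴ) = B := by
      rw [hB, Matrix.mul_assoc, one_sub_mul_conjTranspose_mul_self hV]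
    simpa only [frobSq_one_sub_mul_conjTranspose hU, frobSq_one_sub_mul_conjTranspose hV,
      Fintype.card_fin, min_sub_sub_right] using frobSq_le_sq_mul_min hleft hright hspec
  calc frob Q = √(r + frobSq B) := by rw [frob_eq_sqrt_frobSq, hsplit]
    _ ≤ √((1 / 2) ^ 2 * (min (t : ℝ) p + 3 * r)) := Real.sqrt_le_sqrt (by linarith)
    _ = 1 / 2 * √(min (t : ℝ) p + 3 * r) := by
      rw [Real.sqrt_mul (by positivity), Real.sqrt_sq (by norm_num)]
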